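/- arXiv:2311.01859 — 3 statements merged into one kernel-verified Lean document; each statement's English description precedes it below -/
import Mathlib

section
/- Suppose the state functions x1, x2, x3, x4 : ℝ → ℝ are differentiable and satisfy the linear system x1'(t) = x2(t), x2'(t) = v1(t), x3'(t) = x4(t), x4'(t) = v2(t), and that cos(x1(t)) ≠ 0 for all t. Let q_a^d, r_a^d : ℝ → ℝ be differentiable desired rate trajectories and let c1 > 0, c2 > 0 be real constants. If the controls are chosen as v1(t) = −g1(t) + (q_a^d)'(t) + c1·(q_a^d(t) − q_a(t)) and v2(t) = (−g2(t) + (r_a^d)'(t) + c2·(r_a^d(t) − r_a(t)))/cos(x1(t)), then the tracking errors satisfy q_a^d(t) − q_a(t) = (q_a^d(0) − q_a(0))·exp(−c1·t) and r_a^d(t) − r_a(t) = (r_a^d(0) − r_a(0))·exp(−c2·t) for all t ≥ 0; in particular q_a and r_a converge exponentially to q_a^d and r_a^d with decay rates c1 and c2. -/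
/-!
Differentiating the sensor rates gives `qa' = g1 + v1` and `ra' = g2 + v2 cos x1`, so the
controls (the second divided by `cos x1 ≠ 0`) cancel `g1` and `g2`, and each tracking error `e`
satisfies `e' = -c e`. Its solutions are `e 0 * exp (-c t)`, since `e t * exp (c t)` has zero
derivative.
-/

open Real

theorem eq_mul_exp_of_hasDerivAt_neg_mul {e : ℝ → ℝ} {c : ℝ}
    (he : ∀ t, HasDerivAt e (-c * e t) t) (t : ℝ) : e t = e 0 * exp (-c * t) := by
  have hconst : ∀ s, HasDerivAt (fun s => e s * exp (c * s)) 0 s := fun s =>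
    ((he s).mul ((hasDerivAt_id s).const_mul c).exp).congr_deriv (by ring)
  have h : e t * exp (c * t) = e 0 := by
    simpa using is_const_of_deriv_eq_zero (fun s => (hconst s).differentiableAt)
      (fun s => (hconst s).deriv) t 0
  rw [← h, mul_assoc, ← exp_add]
  simp

section Kinematics

variable {p q r p' q' r' x1 x2 x3 x4 : ℝ → ℝ} {u w : ℝ} {t : ℝ}

theorem hasDerivAt_pitch_rate (hp : HasDerivAt p (p' t) t) (hq : HasDerivAt q (q' t) t)
    (hx2 : HasDerivAt x2 u t) (hx3 : HasDerivAt x3 (x4 t) t) :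
    HasDerivAt (fun t => -p t * sin (x3 t) + q t * cos (x3 t) + x2 t)
      (-p' t * sin (x3 t) - x4 t * p t * cos (x3 t)
        + q' t * cos (x3 t) - x4 t * q t * sin (x3 t) + u) t :=
  ((hp.neg.mul hx3.sin).add (hq.mul hx3.cos) |>.add hx2).congr_deriv (by simp only [Pi.neg_apply]; ring)

theorem hasDerivAt_yaw_rate (hp : HasDerivAt p (p' t) t) (hq : HasDerivAt q (q' t) t)
    (hr : HasDerivAt r (r' t) t) (hx1 : HasDerivAt x1 (x2 t) t)
    (hx3 : HasDerivAt x3 (x4 t) t) (hx4 : HasDerivAt x4 w t) :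
    HasDerivAt (fun t => p t * cos (x3 t) * sin (x1 t) + q t * sin (x3 t) * sin (x1 t)
        + r t * cos (x1 t) + x4 t * cos (x1 t))
      ((p' t * cos (x3 t) - x4 t * p t * sin (x3 t) + q' t * sin (x3 t)
          + x4 t * q t * cos (x3 t)) * sin (x1 t)
        + (p t * cos (x3 t) + q t * sin (x3 t)) * x2 t * cos (x1 t)
        - x2 t * r t * sin (x1 t) - x2 t * x4 t * sin (x1 t)
        + r' t * cos (x1 t) + w * cos (x1 t)) t :=
  ((hp.mul hx3.cos |>.mul hx1.sin).add (hq.mul hx3.sin |>.mul hx1.sin)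
    |>.add (hr.mul hx1.cos) |>.add (hx4.mul hx1.cos)).congr_deriv (by simp only [Pi.mul_apply]; ring)

end Kinematics

theorem rate_tracking_exponential_convergence_general
    (p q r p' q' r' : ℝ → ℝ)
    (hp : ∀ t, HasDerivAt p (p' t) t)
    (hq : ∀ t, HasDerivAt q (q' t) t)
    (hr : ∀ t, HasDerivAt r (r' t) t)
    (x1 x2 x3 x4 v1 v2 g1 g2 qa ra : ℝ → ℝ)
    (hx1 : ∀ t, HasDerivAt x1 (x2 t) t)
    (hx2 : ∀ t, HasDerivAt x2 (v1 t) t)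
    (hx3 : ∀ t, HasDerivAt x3 (x4 t) t)
    (hx4 : ∀ t, HasDerivAt x4 (v2 t) t)
    (hcos : ∀ t, cos (x1 t) ≠ 0)
    (hqa : ∀ t, qa t = -(p t) * sin (x3 t) + q t * cos (x3 t) + x2 t)
    (hra : ∀ t, ra t =
      p t * cos (x3 t) * sin (x1 t) + q t * sin (x3 t) * sin (x1 t)
        + r t * cos (x1 t) + x4 t * cos (x1 t))
    (hg1 : ∀ t, g1 t =
      -p' t * sin (x3 t) - x4 t * p t * cos (x3 t)
        + q' t * cos (x3 t) - x4 t * q t * sin (x3 t))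
    (hg2 : ∀ t, g2 t =
      (p' t * cos (x3 t) - x4 t * p t * sin (x3 t) + q' t * sin (x3 t)
          + x4 t * q t * cos (x3 t)) * sin (x1 t)
        + (p t * cos (x3 t) + q t * sin (x3 t)) * x2 t * cos (x1 t)
        - x2 t * r t * sin (x1 t) - x2 t * x4 t * sin (x1 t)
        + r' t * cos (x1 t))
    (qad rad qad' rad' : ℝ → ℝ)
    (hqad : ∀ t, HasDerivAt qad (qad' t) t)
    (hrad : ∀ t, HasDerivAt rad (rad' t) t)
    (c1 c2 : ℝ)
    (hv1 : ∀ t, v1 t = -g1 t + qad' t + c1 * (qad t - qa t))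
    (hv2 : ∀ t, v2 t = (-g2 t + rad' t + c2 * (rad t - ra t)) / cos (x1 t)) :
    ∀ t, 0 ≤ t →
      qad t - qa t = (qad 0 - qa 0) * exp (-c1 * t) ∧
      rad t - ra t = (rad 0 - ra 0) * exp (-c2 * t) := by
  have hqa' : ∀ t, HasDerivAt qa (g1 t + v1 t) t := fun t => by
    rw [funext hqa, hg1]
    exact hasDerivAt_pitch_rate (hp t) (hq t) (hx2 t) (hx3 t)
  have hra' : ∀ t, HasDerivAt ra (g2 t + v2 t * cos (x1 t)) t := fun t => by
    rw [funext hra, hg2]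
    exact hasDerivAt_yaw_rate (hp t) (hq t) (hr t) (hx1 t) (hx3 t) (hx4 t)
  have hpitch_error : ∀ t, HasDerivAt (fun t => qad t - qa t) (-c1 * (qad t - qa t)) t :=
    fun t => ((hqad t).sub (hqa' t)).congr_deriv (by rw [hv1]; ring)
  have hyaw_error : ∀ t, HasDerivAt (fun t => rad t - ra t) (-c2 * (rad t - ra t)) t :=
    fun t => ((hrad t).sub (hra' t)).congr_deriv (by rw [hv2, div_mul_cancel₀ _ (hcos t)]; ring)
  exact fun t _ => ⟨eq_mul_exp_of_hasDerivAt_neg_mul hpitch_error t,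
    eq_mul_exp_of_hasDerivAt_neg_mul hyaw_error t⟩

/-- Theorem 1: with the rate-tracking feedback controls, the sensor angular
velocities converge exponentially to the desired rate trajectories, with decay
rates `c1` and `c2`. -/
theorem rate_tracking_exponential_convergence
    (p q r p' q' r' : ℝ → ℝ)
    (hp : ∀ t, HasDerivAt p (p' t) t)
    (hq : ∀ t, HasDerivAt q (q' t) t)
    (hr : ∀ t, HasDerivAt r (r' t) t)
    (x1 x2 x3 x4 v1 v2 g1 g2 qa ra : ℝ → ℝ)
    (hx1 : ∀ t, HasDerivAt x1 (x2 t) t)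
    (hx2 : ∀ t, HasDerivAt x2 (v1 t) t)
    (hx3 : ∀ t, HasDerivAt x3 (x4 t) t)
    (hx4 : ∀ t, HasDerivAt x4 (v2 t) t)
    (hcos : ∀ t, cos (x1 t) ≠ 0)
    (hqa : ∀ t, qa t = -(p t) * sin (x3 t) + q t * cos (x3 t) + x2 t)
    (hra : ∀ t, ra t =
      p t * cos (x3 t) * sin (x1 t) + q t * sin (x3 t) * sin (x1 t)
        + r t * cos (x1 t) + x4 t * cos (x1 t))
    (hg1 : ∀ t, g1 t =
      -p' t * sin (x3 t) - x4 t * p t * cos (x3 t)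
        + q' t * cos (x3 t) - x4 t * q t * sin (x3 t))
    (hg2 : ∀ t, g2 t =
      (p' t * cos (x3 t) - x4 t * p t * sin (x3 t) + q' t * sin (x3 t)
          + x4 t * q t * cos (x3 t)) * sin (x1 t)
        + (p t * cos (x3 t) + q t * sin (x3 t)) * x2 t * cos (x1 t)
        - x2 t * r t * sin (x1 t) - x2 t * x4 t * sin (x1 t)
        + r' t * cos (x1 t))
    (qad rad qad' rad' : ℝ → ℝ)
    (hqad : ∀ t, HasDerivAt qad (qad' t) t)
    (hrad : ∀ t, HasDerivAt rad (rad' t) t)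
    (c1 c2 : ℝ) (hc1 : 0 < c1) (hc2 : 0 < c2)
    (hv1 : ∀ t, v1 t = -g1 t + qad' t + c1 * (qad t - qa t))
    (hv2 : ∀ t, v2 t = (-g2 t + rad' t + c2 * (rad t - ra t)) / cos (x1 t)) :
    ∀ t, 0 ≤ t →
      qad t - qa t = (qad 0 - qa 0) * exp (-c1 * t) ∧
      rad t - ra t = (rad 0 - ra 0) * exp (-c2 * t) :=
  rate_tracking_exponential_convergence_general p q r p' q' r' hp hq hr x1 x2 x3 x4 v1 v2 g1 g2 qa
    ra hx1 hx2 hx3 hx4 hcos hqa hra hg1 hg2 qad rad qad' rad' hqad hrad c1 c2 hv1 hv2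
end

section
/- Suppose the state functions x1, x2, x3, x4 : ℝ → ℝ are differentiable and satisfy the linear system x1'(t) = x2(t), x2'(t) = v1(t), x3'(t) = x4(t), x4'(t) = v2(t), and that cos(x1(t)) ≠ 0 for all t. Let q_a^d, r_a^d : ℝ → ℝ be differentiable desired rate trajectories and let c1 > 0, c2 > 0. If the controls are v1(t) = −g1(t) + (q_a^d)'(t) + c1·(q_a^d(t) − q_a(t)) and v2(t) = (−g2(t) + (r_a^d)'(t) + c2·(r_a^d(t) − r_a(t)))/cos(x1(t)), then the error functions e_q(t) = q_a^d(t) − q_a(t) and e_r(t) = r_a^d(t) − r_a(t) are differentiable and satisfy the first-order differential equations e_q'(t) + c1·e_q(t) = 0 and e_r'(t) + c2·e_r(t) = 0 for all t. -/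
/-!
Along the state equations the sensor rates `q_a = pitchRate`, `r_a = yawRate` satisfy
`q_a' = g1 + v1` and `r_a' = g2 + v2 cos x1`, where `g1 = pitchDrift`, `g2 = yawDrift`
are the drift terms of these input-affine dynamics.
The controls are the feedback-linearizing inputs that cancel the drifts and impose
`q_a' = (q_a^d)' + c1 e_q`, `r_a' = (r_a^d)' + c2 e_r`, whence `e' = -c e`.
-/

open Real

theorem HasDerivAt.sub_of_tracking {d y : ℝ → ℝ} {d' c t : ℝ} (hd : HasDerivAt d d' t)
    (hy : HasDerivAt y (d' + c * (d t - y t)) t) :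
    HasDerivAt (fun s => d s - y s) (-(c * (d t - y t))) t :=
  (hd.sub hy).congr_deriv (by ring)

noncomputable section

namespace RateTracking

def pitchRate (p q x2 x3 : ℝ → ℝ) (t : ℝ) : ℝ :=
  -(p t) * sin (x3 t) + q t * cos (x3 t) + x2 t

def yawRate (p q r x1 x3 x4 : ℝ → ℝ) (t : ℝ) : ℝ :=
  p t * cos (x3 t) * sin (x1 t) + q t * sin (x3 t) * sin (x1 t)
    + r t * cos (x1 t) + x4 t * cos (x1 t)

def pitchDrift (p q p' q' x3 x4 : ℝ → ℝ) (t : ℝ) : ℝ :=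
  -p' t * sin (x3 t) - x4 t * p t * cos (x3 t)
    + q' t * cos (x3 t) - x4 t * q t * sin (x3 t)

def yawDrift (p q r p' q' r' x1 x2 x3 x4 : ℝ → ℝ) (t : ℝ) : ℝ :=
  (p' t * cos (x3 t) - x4 t * p t * sin (x3 t) + q' t * sin (x3 t)
      + x4 t * q t * cos (x3 t)) * sin (x1 t)
    + (p t * cos (x3 t) + q t * sin (x3 t)) * x2 t * cos (x1 t)
    - x2 t * r t * sin (x1 t) - x2 t * x4 t * sin (x1 t)
    + r' t * cos (x1 t)

variable {p q r p' q' r' x1 x2 x3 x4 : ℝ → ℝ} {a t : ℝ}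

theorem hasDerivAt_pitchRate (hp : HasDerivAt p (p' t) t) (hq : HasDerivAt q (q' t) t)
    (hx2 : HasDerivAt x2 a t) (hx3 : HasDerivAt x3 (x4 t) t) :
    HasDerivAt (pitchRate p q x2 x3) (pitchDrift p q p' q' x3 x4 t + a) t := by
  refine ((hp.neg.mul hx3.sin).add (hq.mul hx3.cos) |>.add hx2).congr_deriv ?_
  simp only [pitchDrift, Pi.neg_apply]
  ring

theorem hasDerivAt_yawRate (hp : HasDerivAt p (p' t) t) (hq : HasDerivAt q (q' t) t)
    (hr : HasDerivAt r (r' t) t) (hx1 : HasDerivAt x1 (x2 t) t)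
    (hx3 : HasDerivAt x3 (x4 t) t) (hx4 : HasDerivAt x4 a t) :
    HasDerivAt (yawRate p q r x1 x3 x4)
      (yawDrift p q r p' q' r' x1 x2 x3 x4 t + a * cos (x1 t)) t := by
  refine (((hp.mul hx3.cos).mul hx1.sin).add ((hq.mul hx3.sin).mul hx1.sin)
    |>.add (hr.mul hx1.cos) |>.add (hx4.mul hx1.cos)).congr_deriv ?_
  simp only [yawDrift, Pi.mul_apply]
  ring

end RateTracking

end

open RateTracking

theorem rate_tracking_error_dynamics_general
    (p q r p' q' r' : ℝ → ℝ)
    (hp : ∀ t, HasDerivAt p (p' t) t)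
    (hq : ∀ t, HasDerivAt q (q' t) t)
    (hr : ∀ t, HasDerivAt r (r' t) t)
    (x1 x2 x3 x4 v1 v2 g1 g2 qa ra : ℝ → ℝ)
    (hx1 : ∀ t, HasDerivAt x1 (x2 t) t)
    (hx2 : ∀ t, HasDerivAt x2 (v1 t) t)
    (hx3 : ∀ t, HasDerivAt x3 (x4 t) t)
    (hx4 : ∀ t, HasDerivAt x4 (v2 t) t)
    (hcos : ∀ t, cos (x1 t) ≠ 0)
    (hqa : ∀ t, qa t = -(p t) * sin (x3 t) + q t * cos (x3 t) + x2 t)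
    (hra : ∀ t, ra t =
      p t * cos (x3 t) * sin (x1 t) + q t * sin (x3 t) * sin (x1 t)
        + r t * cos (x1 t) + x4 t * cos (x1 t))
    (hg1 : ∀ t, g1 t =
      -p' t * sin (x3 t) - x4 t * p t * cos (x3 t)
        + q' t * cos (x3 t) - x4 t * q t * sin (x3 t))
    (hg2 : ∀ t, g2 t =
      (p' t * cos (x3 t) - x4 t * p t * sin (x3 t) + q' t * sin (x3 t)
          + x4 t * q t * cos (x3 t)) * sin (x1 t)
        + (p t * cos (x3 t) + q t * sin (x3 t)) * x2 t * cos (x1 t)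
        - x2 t * r t * sin (x1 t) - x2 t * x4 t * sin (x1 t)
        + r' t * cos (x1 t))
    (qad rad qad' rad' : ℝ → ℝ)
    (hqad : ∀ t, HasDerivAt qad (qad' t) t)
    (hrad : ∀ t, HasDerivAt rad (rad' t) t)
    (c1 c2 : ℝ)
    (hv1 : ∀ t, v1 t = -g1 t + qad' t + c1 * (qad t - qa t))
    (hv2 : ∀ t, v2 t = (-g2 t + rad' t + c2 * (rad t - ra t)) / cos (x1 t))
    (eq er : ℝ → ℝ)
    (heq : ∀ t, eq t = qad t - qa t)
    (her : ∀ t, er t = rad t - ra t) :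
    (∀ t, DifferentiableAt ℝ eq t) ∧ (∀ t, DifferentiableAt ℝ er t) ∧
      (∀ t, deriv eq t + c1 * eq t = 0) ∧ (∀ t, deriv er t + c2 * er t = 0) := by
  obtain rfl : qa = pitchRate p q x2 x3 := funext hqa
  obtain rfl : ra = yawRate p q r x1 x3 x4 := funext hra
  obtain rfl : g1 = pitchDrift p q p' q' x3 x4 := funext hg1
  obtain rfl : g2 = yawDrift p q r p' q' r' x1 x2 x3 x4 := funext hg2
  have hEq : ∀ t, HasDerivAt eq (-(c1 * eq t)) t := fun t => by
    rw [show eq = fun s => qad s - pitchRate p q x2 x3 s from funext heq]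
    exact (hqad t).sub_of_tracking <|
      (hasDerivAt_pitchRate (hp t) (hq t) (hx2 t) (hx3 t)).congr_deriv (by rw [hv1]; ring)
  have hEr : ∀ t, HasDerivAt er (-(c2 * er t)) t := fun t => by
    rw [show er = fun s => rad s - yawRate p q r x1 x3 x4 s from funext her]
    exact (hrad t).sub_of_tracking <|
      (hasDerivAt_yawRate (hp t) (hq t) (hr t) (hx1 t) (hx3 t) (hx4 t)).congr_deriv
        (by rw [hv2, div_mul_cancel₀ _ (hcos t)]; ring)
  refine ⟨fun t => (hEq t).differentiableAt, fun t => (hEr t).differentiableAt,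
    fun t => ?_, fun t => ?_⟩
  · rw [(hEq t).deriv]; ring
  · rw [(hEr t).deriv]; ring

/-- With the rate-tracking feedback controls, the rate tracking errors
`e_q = q_a^d − q_a` and `e_r = r_a^d − r_a` are differentiable and satisfy the
first-order error dynamics `e' + c·e = 0`. -/
theorem rate_tracking_error_dynamics
    (p q r p' q' r' : ℝ → ℝ)
    (hp : ∀ t, HasDerivAt p (p' t) t)
    (hq : ∀ t, HasDerivAt q (q' t) t)
    (hr : ∀ t, HasDerivAt r (r' t) t)
    (x1 x2 x3 x4 v1 v2 g1 g2 qa ra : ℝ → ℝ)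
    (hx1 : ∀ t, HasDerivAt x1 (x2 t) t)
    (hx2 : ∀ t, HasDerivAt x2 (v1 t) t)
    (hx3 : ∀ t, HasDerivAt x3 (x4 t) t)
    (hx4 : ∀ t, HasDerivAt x4 (v2 t) t)
    (hcos : ∀ t, cos (x1 t) ≠ 0)
    (hqa : ∀ t, qa t = -(p t) * sin (x3 t) + q t * cos (x3 t) + x2 t)
    (hra : ∀ t, ra t =
      p t * cos (x3 t) * sin (x1 t) + q t * sin (x3 t) * sin (x1 t)
        + r t * cos (x1 t) + x4 t * cos (x1 t))
    (hg1 : ∀ t, g1 t =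
      -p' t * sin (x3 t) - x4 t * p t * cos (x3 t)
        + q' t * cos (x3 t) - x4 t * q t * sin (x3 t))
    (hg2 : ∀ t, g2 t =
      (p' t * cos (x3 t) - x4 t * p t * sin (x3 t) + q' t * sin (x3 t)
          + x4 t * q t * cos (x3 t)) * sin (x1 t)
        + (p t * cos (x3 t) + q t * sin (x3 t)) * x2 t * cos (x1 t)
        - x2 t * r t * sin (x1 t) - x2 t * x4 t * sin (x1 t)
        + r' t * cos (x1 t))
    (qad rad qad' rad' : ℝ → ℝ)
    (hqad : ∀ t, HasDerivAt qad (qad' t) t)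
    (hrad : ∀ t, HasDerivAt rad (rad' t) t)
    (c1 c2 : ℝ) (hc1 : 0 < c1) (hc2 : 0 < c2)
    (hv1 : ∀ t, v1 t = -g1 t + qad' t + c1 * (qad t - qa t))
    (hv2 : ∀ t, v2 t = (-g2 t + rad' t + c2 * (rad t - ra t)) / cos (x1 t))
    (eq er : ℝ → ℝ)
    (heq : ∀ t, eq t = qad t - qa t)
    (her : ∀ t, er t = rad t - ra t) :
    (∀ t, DifferentiableAt ℝ eq t) ∧ (∀ t, DifferentiableAt ℝ er t) ∧
      (∀ t, deriv eq t + c1 * eq t = 0) ∧ (∀ t, deriv er t + c2 * er t = 0) :=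
  rate_tracking_error_dynamics_general p q r p' q' r' hp hq hr x1 x2 x3 x4 v1 v2 g1 g2 qa ra hx1 hx2
    hx3 hx4 hcos hqa hra hg1 hg2 qad rad qad' rad' hqad hrad c1 c2 hv1 hv2 eq er heq her
end

section
/- Suppose the state functions x1, x2, x3, x4 : ℝ → ℝ are differentiable and satisfy the linear system x1'(t) = x2(t), x2'(t) = v1(t), x3'(t) = x4(t), x4'(t) = v2(t), and that cos(x1(t)) ≠ 0 for all t. Let θ_q, θ_r : ℝ → ℝ be differentiable functions with θ_q'(t) = q_a(t) and θ_r'(t) = r_a(t) (the elevation and azimuth LOS angles), let θ_q^d, θ_r^d : ℝ → ℝ be twice-differentiable desired trajectories, and let c1, c2, c3, c4 > 0 be real constants. If the controls are chosen as v1(t) = −g1(t) + (θ_q^d)''(t) + c1·((θ_q^d)'(t) − θ_q'(t)) + c2·(θ_q^d(t) − θ_q(t)) and v2(t) = (1/cos(x1(t)))·(−g2(t) + (θ_r^d)''(t) + c3·((θ_r^d)'(t) − θ_r'(t)) + c4·(θ_r^d(t) − θ_r(t))), then there exist constants M ≥ 0 and λ > 0 such that |θ_q(t) − θ_q^d(t)|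 ≤ M·exp(−λ·t) and |θ_r(t) − θ_r^d(t)| ≤ M·exp(−λ·t) for all t ≥ 0; in particular the elevation and azimuth angles of the sensor LOS converge exponentially to their desired trajectories. -/
/-!
Differentiating the sensor rates `q_a`, `r_a` along the platform motion gives
`q_a' = g1 + v1` and `r_a' = g2 + v2 cos x1`, so the controls feedback-linearise each channel:
the tracking error `e = θ - θ^d` solves the damped oscillator `e'' + c e' + c' e = 0`.
For `e'' + a e' + b e = 0` with `a, b > 0` and `ε = min a (b / a)`, the tilted energy
`V = b e² + ε e e' + e'²` is bounded below by `(b / 2) e²` and satisfies `V' ≤ -(ε / 2) V`,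
so Grönwall's inequality makes `e` decay like `exp (-(ε / 4) t)`.
-/

open Real

def ExpDecays (f : ℝ → ℝ) : Prop :=
  ∃ M lam : ℝ, 0 ≤ M ∧ 0 < lam ∧ ∀ t, 0 ≤ t → |f t| ≤ M * exp (-lam * t)

theorem ExpDecays.exists_common {f g : ℝ → ℝ} (hf : ExpDecays f) (hg : ExpDecays g) :
    ∃ M lam : ℝ, 0 ≤ M ∧ 0 < lam ∧
      ∀ t, 0 ≤ t → |f t| ≤ M * exp (-lam * t) ∧ |g t| ≤ M * exp (-lam * t) := by
  obtain ⟨M₁, l₁, hM₁, hl₁, hf⟩ := hf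
  obtain ⟨M₂, l₂, hM₂, hl₂, hg⟩ := hg
  have weaken : ∀ {M l}, M ≤ max M₁ M₂ → min l₁ l₂ ≤ l → ∀ t, 0 ≤ t →
      M * exp (-l * t) ≤ max M₁ M₂ * exp (-min l₁ l₂ * t) := fun hM hl t ht => by
    gcongr
  refine ⟨max M₁ M₂, min l₁ l₂, hM₁.trans (le_max_left _ _), lt_min hl₁ hl₂, fun t ht => ⟨?_, ?_⟩⟩
  · exact (hf t ht).trans (weaken (le_max_left _ _) (min_le_left _ _) t ht)
  · exact (hg t ht).trans (weaken (le_max_right _ _) (min_le_right _ _) t ht)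

theorem le_mul_exp_of_hasDerivAt_le_neg_mul {V V' : ℝ → ℝ} {k : ℝ}
    (hV : ∀ t, HasDerivAt V (V' t) t) (hV' : ∀ t, V' t ≤ -k * V t) {t : ℝ} (ht : 0 ≤ t) :
    V t ≤ V 0 * exp (-k * t) := by
  have := le_gronwallBound_of_liminf_deriv_right_le (a := 0) (b := t) (K := -k) (ε := 0)
    (fun x _ => (hV x).continuousAt.continuousWithinAt)
    (fun x _ r hr => by simpa [slope_def_field, div_eq_inv_mul] using
      (hV x).hasDerivWithinAt.liminf_right_slope_le hr)
    le_rfl (fun x _ => by simpa using hV' x) t ⟨ht, le_rfl⟩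
  simpa [gronwallBound_ε0] using this

section DampedOscillator

def dampedLyapunov (b ε x y : ℝ) : ℝ := b * x ^ 2 + ε * x * y + y ^ 2

variable {a b ε : ℝ}

theorem half_mul_sq_le_dampedLyapunov (hε : ε ^ 2 ≤ 2 * b) (x y : ℝ) :
    b / 2 * x ^ 2 ≤ dampedLyapunov b ε x y := by
  unfold dampedLyapunov
  nlinarith [sq_nonneg (ε * x + 2 * y), sq_nonneg x]

theorem hasDerivAt_dampedLyapunov {e e' : ℝ → ℝ} {t : ℝ} (he : HasDerivAt e (e' t) t)
    (he' : HasDerivAt e' (-(a * e' t) - b * e t) t) :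
    HasDerivAt (fun s => dampedLyapunov b ε (e s) (e' s))
      (-(ε * b * e t ^ 2 + ε * a * e t * e' t + (2 * a - ε) * e' t ^ 2)) t := by
  unfold dampedLyapunov
  exact ((((he.pow 2).const_mul b).add ((he.const_mul ε).mul he')).add (he'.pow 2)).congr_deriv
    (by push_cast; ring)

/-- The form `(ε b / 2) x² + (ε a - ε² / 2) x y + (2 a - 3 ε / 2) y²` is positive semidefinite:
as `ε ≤ a` and `ε a ≤ b`, its discriminant is at most `ε a (ε a - b) ≤ 0`. -/
theorem dampedLyapunov_deriv_le (hε : 0 < ε) (hεa : ε ≤ a) (hεab : ε * a ≤ b) (x y : ℝ) :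
    -(ε * b * x ^ 2 + ε * a * x * y + (2 * a - ε) * y ^ 2) ≤
      -(ε / 2) * dampedLyapunov b ε x y := by
  unfold dampedLyapunov
  have hεa₀ : 0 ≤ ε * a := by nlinarith
  have hcross : 0 ≤ ε * a - ε ^ 2 / 2 := by nlinarith
  have hdisc : (ε * a - ε ^ 2 / 2) ^ 2 ≤ ε * b * (4 * a - 3 * ε) :=
    calc (ε * a - ε ^ 2 / 2) ^ 2 ≤ (ε * a) ^ 2 := by gcongr; nlinarith
      _ ≤ ε * a * b := by rw [sq]; gcongr
      _ ≤ ε * b * (4 * a - 3 * ε) := by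
        nlinarith [mul_le_mul_of_nonneg_left (show a ≤ 4 * a - 3 * ε by linarith)
          (mul_nonneg hε.le (hεa₀.trans hεab))]
  have hC : 0 < 2 * a - 3 * ε / 2 := by linarith
  nlinarith [sq_nonneg (2 * (2 * a - 3 * ε / 2) * y + (ε * a - ε ^ 2 / 2) * x),
    mul_nonneg (sq_nonneg x) (sub_nonneg.2 hdisc)]

theorem expDecays_of_damped (ha : 0 < a) (hb : 0 < b) {e e' : ℝ → ℝ}
    (he : ∀ t, HasDerivAt e (e' t) t) (he' : ∀ t, HasDerivAt e' (-(a * e' t) - b * e t) t) :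
    ExpDecays e := by
  set ε := min a (b / a)
  have hε : 0 < ε := lt_min ha (div_pos hb ha)
  have hεa : ε ≤ a := min_le_left _ _
  have hεab : ε * a ≤ b := (le_div_iff₀ ha).1 (min_le_right _ _)
  set V := fun t => dampedLyapunov b ε (e t) (e' t)
  have hlower : ∀ t, b / 2 * e t ^ 2 ≤ V t :=
    fun t => half_mul_sq_le_dampedLyapunov (by nlinarith) _ _
  have hupper : ∀ t, 0 ≤ t → V t ≤ V 0 * exp (-(ε / 2) * t) :=
    fun t => le_mul_exp_of_hasDerivAt_le_neg_mul
      (fun s => hasDerivAt_dampedLyapunov (he s) (he' s))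
      (fun s => dampedLyapunov_deriv_le hε hεa hεab _ _)
  have hV₀ : 0 ≤ 2 / b * V 0 :=
    mul_nonneg (by positivity) ((by positivity : 0 ≤ b / 2 * e 0 ^ 2).trans (hlower 0))
  refine ⟨√(2 / b * V 0), ε / 4, sqrt_nonneg _, by positivity,
    fun t ht => abs_le_of_sq_le_sq ?_ (by positivity)⟩
  calc e t ^ 2 = 2 / b * (b / 2 * e t ^ 2) := by field_simp
    _ ≤ 2 / b * (V 0 * exp (-(ε / 2) * t)) :=
      mul_le_mul_of_nonneg_left ((hlower t).trans (hupper t ht)) (by positivity)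
    _ = (√(2 / b * V 0) * exp (-(ε / 4) * t)) ^ 2 := by
      rw [mul_pow, sq_sqrt hV₀, ← exp_nat_mul]
      ring_nf

theorem expDecays_sub_of_tracking_law {θ s ds θd θd' θd'' : ℝ → ℝ} (ha : 0 < a) (hb : 0 < b)
    (hθ : ∀ t, HasDerivAt θ (s t) t) (hs : ∀ t, HasDerivAt s (ds t) t)
    (hθd : ∀ t, HasDerivAt θd (θd' t) t) (hθd' : ∀ t, HasDerivAt θd' (θd'' t) t)
    (hds : ∀ t, ds t = θd'' t + a * (θd' t - s t) + b * (θd t - θ t)) :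
    ExpDecays fun t => θ t - θd t :=
  expDecays_of_damped ha hb (fun t => (hθ t).sub (hθd t))
    (fun t => ((hs t).sub (hθd' t)).congr_deriv (by rw [hds]; ring))

end DampedOscillator

section SensorKinematics

variable {p q r p' q' r' x1 x2 x3 x4 : ℝ → ℝ} {t v : ℝ}

theorem hasDerivAt_pitchRate (hp : HasDerivAt p (p' t) t) (hq : HasDerivAt q (q' t) t)
    (hx2 : HasDerivAt x2 v t) (hx3 : HasDerivAt x3 (x4 t) t) :
    HasDerivAt (fun s => -(p s) * sin (x3 s) + q s * cos (x3 s) + x2 s)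
      (-p' t * sin (x3 t) - x4 t * p t * cos (x3 t)
        + q' t * cos (x3 t) - x4 t * q t * sin (x3 t) + v) t :=
  (((hp.neg.mul hx3.sin).add (hq.mul hx3.cos)).add hx2).congr_deriv
    (by simp only [Pi.neg_apply]; ring)

theorem hasDerivAt_yawRate (hp : HasDerivAt p (p' t) t) (hq : HasDerivAt q (q' t) t)
    (hr : HasDerivAt r (r' t) t) (hx1 : HasDerivAt x1 (x2 t) t)
    (hx3 : HasDerivAt x3 (x4 t) t) (hx4 : HasDerivAt x4 v t) :
    HasDerivAt (fun s => p s * cos (x3 s) * sin (x1 s) + q s * sin (x3 s) * sin (x1 s)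
        + r s * cos (x1 s) + x4 s * cos (x1 s))
      ((p' t * cos (x3 t) - x4 t * p t * sin (x3 t) + q' t * sin (x3 t)
          + x4 t * q t * cos (x3 t)) * sin (x1 t)
        + (p t * cos (x3 t) + q t * sin (x3 t)) * x2 t * cos (x1 t)
        - x2 t * r t * sin (x1 t) - x2 t * x4 t * sin (x1 t)
        + r' t * cos (x1 t) + v * cos (x1 t)) t :=
  (((((hp.mul hx3.cos).mul hx1.sin).add ((hq.mul hx3.sin).mul hx1.sin)).add
    (hr.mul hx1.cos)).add (hx4.mul hx1.cos)).congr_deriv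
    (by simp only [Pi.mul_apply]; ring)

end SensorKinematics

/-- Theorem 2: with the LOS-tracking feedback controls, the elevation and
azimuth angles of the sensor LOS converge exponentially to the desired
trajectories. -/
theorem los_tracking_exponential_convergence
    (p q r p' q' r' : ℝ → ℝ)
    (hp : ∀ t, HasDerivAt p (p' t) t)
    (hq : ∀ t, HasDerivAt q (q' t) t)
    (hr : ∀ t, HasDerivAt r (r' t) t)
    (x1 x2 x3 x4 v1 v2 g1 g2 qa ra : ℝ → ℝ)
    (hx1 : ∀ t, HasDerivAt x1 (x2 t) t)
    (hx2 : ∀ t, HasDerivAt x2 (v1 t) t)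
    (hx3 : ∀ t, HasDerivAt x3 (x4 t) t)
    (hx4 : ∀ t, HasDerivAt x4 (v2 t) t)
    (hcos : ∀ t, cos (x1 t) ≠ 0)
    (hqa : ∀ t, qa t = -(p t) * sin (x3 t) + q t * cos (x3 t) + x2 t)
    (hra : ∀ t, ra t =
      p t * cos (x3 t) * sin (x1 t) + q t * sin (x3 t) * sin (x1 t)
        + r t * cos (x1 t) + x4 t * cos (x1 t))
    (hg1 : ∀ t, g1 t =
      -p' t * sin (x3 t) - x4 t * p t * cos (x3 t)
        + q' t * cos (x3 t) - x4 t * q t * sin (x3 t))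
    (hg2 : ∀ t, g2 t =
      (p' t * cos (x3 t) - x4 t * p t * sin (x3 t) + q' t * sin (x3 t)
          + x4 t * q t * cos (x3 t)) * sin (x1 t)
        + (p t * cos (x3 t) + q t * sin (x3 t)) * x2 t * cos (x1 t)
        - x2 t * r t * sin (x1 t) - x2 t * x4 t * sin (x1 t)
        + r' t * cos (x1 t))
    (thq thr : ℝ → ℝ)
    (hthq : ∀ t, HasDerivAt thq (qa t) t)
    (hthr : ∀ t, HasDerivAt thr (ra t) t)
    (thqd thrd thqd' thrd' thqd'' thrd'' : ℝ → ℝ)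
    (hthqd : ∀ t, HasDerivAt thqd (thqd' t) t)
    (hthrd : ∀ t, HasDerivAt thrd (thrd' t) t)
    (hthqd' : ∀ t, HasDerivAt thqd' (thqd'' t) t)
    (hthrd' : ∀ t, HasDerivAt thrd' (thrd'' t) t)
    (c1 c2 c3 c4 : ℝ) (hc1 : 0 < c1) (hc2 : 0 < c2) (hc3 : 0 < c3) (hc4 : 0 < c4)
    (hv1 : ∀ t, v1 t =
      -g1 t + thqd'' t + c1 * (thqd' t - deriv thq t) + c2 * (thqd t - thq t))
    (hv2 : ∀ t, v2 t = (1 / cos (x1 t)) *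
      (-g2 t + thrd'' t + c3 * (thrd' t - deriv thr t) + c4 * (thrd t - thr t))) :
    ∃ M lam : ℝ, 0 ≤ M ∧ 0 < lam ∧
      ∀ t, 0 ≤ t →
        |thq t - thqd t| ≤ M * exp (-lam * t) ∧
        |thr t - thrd t| ≤ M * exp (-lam * t) := by
  have hqa' : ∀ t, HasDerivAt qa (g1 t + v1 t) t := fun t => by
    rw [funext hqa, hg1]
    exact hasDerivAt_pitchRate (hp t) (hq t) (hx2 t) (hx3 t)
  have hra' : ∀ t, HasDerivAt ra (g2 t + v2 t * cos (x1 t)) t := fun t => by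
    rw [funext hra, hg2]
    exact hasDerivAt_yawRate (hp t) (hq t) (hr t) (hx1 t) (hx3 t) (hx4 t)
  refine ExpDecays.exists_common
    (expDecays_sub_of_tracking_law hc1 hc2 hthq hqa' hthqd hthqd' fun t => ?_)
    (expDecays_sub_of_tracking_law hc3 hc4 hthr hra' hthrd hthrd' fun t => ?_)
  · rw [hv1, (hthq t).deriv]
    ring
  · rw [hv2, (hthr t).deriv]
    field_simp [hcos t]
    ring
end
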